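/- arXiv:1512.01402 — 3 statements merged into one kernel-verified Lean document; each statement's English description precedes it below -/
import Mathlib

section
/- For every odd integer n ≥ 3, the scaling factor S(n) = cos(π/(2n))/sin²(π/(2n)) equals the sum (n-1)·d(1) + (n-3)·d(3) + ... + 2·d(n-2), where d(k) = 2cos(kπ/(2n)); i.e., S(n) = Σ_{k odd, 1 ≤ k ≤ n-2} (n-k)·2cos(kπ/(2n)). -/
open Real

private lemma key_term (c t x : ℝ) :
    c * (2 * Real.cos ((2*x+1)*t)) * Real.sin t ^ 2 =
      (c/2 * (Real.cos ((2*x+1)*t) - Real.cos ((2*x-1)*t)) + Real.cos ((2*x+1)*t)) -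
      ((c-2)/2 * (Real.cos ((2*x+3)*t) - Real.cos ((2*x+1)*t)) + Real.cos ((2*x+3)*t)) := by
  have h1 : (2*x+3)*t = (2*x+1)*t + 2*t := by ring
  have h2 : (2*x-1)*t = (2*x+1)*t - 2*t := by ring
  rw [h1, h2, Real.cos_add, Real.cos_sub, Real.cos_two_mul, Real.sin_two_mul, Real.sin_sq]
  ring

/-- For every odd `n ≥ 3`, the scaling factor `S(n) = cos(π/(2n))/sin²(π/(2n))` equals
`Σ_{k odd, 1 ≤ k ≤ n-2} (n-k)·2cos(kπ/(2n))`. -/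
theorem subrosa_scaling_odd (n : ℕ) (hn : Odd n) (h3 : 3 ≤ n) :
    Real.cos (π / (2 * n)) / (Real.sin (π / (2 * n))) ^ 2 =
      ∑ k ∈ (Finset.range (n - 1)).filter (fun k => Odd k),
        ((n : ℝ) - k) * (2 * Real.cos (k * π / (2 * n))) := by
  obtain ⟨m, rfl⟩ := hn
  have hm : 1 ≤ m := by omega
  set θ : ℝ := π / (2 * ((2 * m + 1 : ℕ) : ℝ)) with hθ
  have hN : (0:ℝ) < ((2 * m + 1 : ℕ) : ℝ) := by positivity
  have hθpos : 0 < θ := by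
    apply div_pos Real.pi_pos
    positivity
  have h3' : (3:ℝ) ≤ ((2 * m + 1 : ℕ) : ℝ) := by exact_mod_cast h3
  have hθlt : θ < π := by
    rw [hθ, div_lt_iff₀ (by positivity)]
    nlinarith [Real.pi_pos]
  have hsin : Real.sin θ ≠ 0 := ne_of_gt (Real.sin_pos_of_pos_of_lt_pi hθpos hθlt)
  have hs2 : Real.sin θ ^ 2 ≠ 0 := pow_ne_zero _ hsin
  rw [div_eq_iff hs2]
  -- reindex the sum
  have himg : (Finset.range (2 * m + 1 - 1)).filter (fun k => Odd k)
      = (Finset.range m).image (fun j => 2 * j + 1) := by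
    ext k
    simp only [Finset.mem_filter, Finset.mem_range, Finset.mem_image, Nat.odd_iff]
    constructor
    · rintro ⟨hk, hodd⟩
      exact ⟨k / 2, by omega, by omega⟩
    · rintro ⟨j, hj, rfl⟩
      omega
  rw [himg, Finset.sum_image (by intro a _ b _ h; simp only at h; omega), Finset.sum_mul]
  -- telescoping function
  set g : ℕ → ℝ := fun j =>
    ((2 * (m:ℝ) + 1) - (2 * (j:ℝ) + 1)) / 2 *
      (Real.cos ((2 * (j:ℝ) + 1) * θ) - Real.cos ((2 * (j:ℝ) - 1) * θ)) +
      Real.cos ((2 * (j:ℝ) + 1) * θ) with hg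
  have hterm : ∀ j ∈ Finset.range m,
      (((2*m+1 : ℕ) : ℝ) - ((2*j+1 : ℕ) : ℝ)) *
        (2 * Real.cos (((2*j+1 : ℕ) : ℝ) * π / (2 * ((2*m+1 : ℕ) : ℝ)))) * Real.sin θ ^ 2
      = g j - g (j + 1) := by
    intro j _
    have harg : ((2*j+1 : ℕ) : ℝ) * π / (2 * ((2*m+1 : ℕ) : ℝ))
        = (2 * (j:ℝ) + 1) * θ := by
      rw [hθ]; push_cast; ring
    rw [harg]
    have hkey := key_term (((2*m+1 : ℕ) : ℝ) - ((2*j+1 : ℕ) : ℝ)) θ (j : ℝ)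
    rw [hkey, hg]
    push_cast
    ring_nf
  rw [Finset.sum_congr rfl hterm, Finset.sum_range_sub' g m]
  have hg0 : g 0 = Real.cos θ := by
    simp only [hg]
    norm_num
  have hgm : g m = 0 := by
    simp only [hg]
    have h1 : ((2 * (m:ℝ) + 1) - (2 * (m:ℝ) + 1)) / 2 = 0 := by ring
    have h2 : (2 * (m:ℝ) + 1) * θ = π / 2 := by
      rw [hθ]; push_cast
      field_simp
    rw [h1, h2, Real.cos_pi_div_two]
    ring
  rw [hg0, hgm]
  ring
end

section
/- For every even integer n ≥ 2, n·1 + Σ_{k even, 2 ≤ k ≤ n-2} (n-k)·2cos(kπ/(2n)) = 2/(1-cos(π/n)). -/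
open Real

private lemma tele (a θ : ℝ) : ∀ M : ℕ,
    (1 - Real.cos θ) *
      ∑ j ∈ Finset.range M, (a - 2*((j:ℝ)+1)) * (2 * Real.cos (((j:ℝ)+1)*θ)) =
    -(a - 2*M) * (Real.cos (((M:ℝ)+1)*θ) - Real.cos ((M:ℝ)*θ))
      + (a-2) * (Real.cos θ - 1) - 2*(Real.cos ((M:ℝ)*θ) - Real.cos θ) := by
  intro M
  induction M with
  | zero => simp; ring
  | succ M ih =>
    rw [Finset.sum_range_succ, mul_add, ih]
    have h1 : Real.cos (((M:ℝ)+1+1)*θ)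
        = Real.cos (((M:ℝ)+1)*θ) * Real.cos θ - Real.sin (((M:ℝ)+1)*θ) * Real.sin θ := by
      rw [show ((M:ℝ)+1+1)*θ = ((M:ℝ)+1)*θ + θ by ring, Real.cos_add]
    have h2 : Real.cos ((M:ℝ)*θ)
        = Real.cos (((M:ℝ)+1)*θ) * Real.cos θ + Real.sin (((M:ℝ)+1)*θ) * Real.sin θ := by
      rw [show (M:ℝ)*θ = ((M:ℝ)+1)*θ - θ by ring, Real.cos_sub]
    push_cast
    rw [h1, h2]
    ring

/-- For every even `n ≥ 2`:
`n·1 + Σ_{k even, 2 ≤ k ≤ n-2} (n-k)·2cos(kπ/(2n)) = 2/(1-cos(π/n))`. -/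
theorem subrosa_scaling_even (n : ℕ) (hn : Even n) (h2 : 2 ≤ n) :
    (n : ℝ) * 1 +
      ∑ k ∈ (Finset.range (n - 1)).filter (fun k => Even k ∧ 2 ≤ k),
        ((n : ℝ) - k) * (2 * Real.cos (k * π / (2 * n))) =
      2 / (1 - Real.cos (π / n)) := by
  obtain ⟨m, rfl⟩ := hn
  have hm : 1 ≤ m := by omega
  set θ : ℝ := π / (↑(m + m)) with hθ
  have hmR : (0:ℝ) < m := by exact_mod_cast hm
  -- θ is in (0, π], so cos θ < 1
  have hθpos : 0 < θ := by
    rw [hθ]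
    apply div_pos Real.pi_pos
    positivity
  have hθle : θ ≤ π := by
    rw [hθ]
    rw [div_le_iff₀ (by positivity)]
    have h1 : (1:ℝ) ≤ ↑(m+m) := by exact_mod_cast (by omega : 1 ≤ m+m)
    nlinarith [Real.pi_pos]
  have hcos : Real.cos θ < 1 := by
    have := Real.cos_lt_cos_of_nonneg_of_le_pi le_rfl hθle hθpos
    simpa using this
  have hne : 1 - Real.cos θ ≠ 0 := by linarith
  -- reindex the sum
  have hset : (Finset.range (m + m - 1)).filter (fun k => Even k ∧ 2 ≤ k)
      = Finset.image (fun j => 2*j+2) (Finset.range (m-1)) := by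
    ext k
    simp only [Finset.mem_filter, Finset.mem_range, Finset.mem_image, Nat.even_iff]
    constructor
    · rintro ⟨hk, he, hk2⟩
      exact ⟨k/2 - 1, by omega, by omega⟩
    · rintro ⟨j, hj, rfl⟩
      omega
  rw [hset, Finset.sum_image (by intro a _ b _ h; simp only at h; omega)]
  have hterm : ∀ j ∈ Finset.range (m-1),
      ((↑(m+m):ℝ) - ↑(2*j+2)) * (2 * Real.cos (↑(2*j+2) * π / (2 * ↑(m+m))))
      = ((↑(m+m):ℝ) - 2*((j:ℝ)+1)) * (2 * Real.cos (((j:ℝ)+1)*θ)) := by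
    intro j _
    have : (↑(2*j+2):ℝ) * π / (2 * ↑(m+m)) = ((j:ℝ)+1)*θ := by
      rw [hθ]; push_cast; field_simp
    rw [this]; push_cast; ring
  rw [Finset.sum_congr rfl hterm]
  rw [eq_div_iff hne]
  have htel := tele (↑(m+m)) θ (m-1)
  have hM : ((m-1 : ℕ):ℝ) = (m:ℝ) - 1 := by
    push_cast [hm]; ring
  rw [hM] at htel
  have hc1 : Real.cos (((m:ℝ)-1+1)*θ) = 0 := by
    have : ((m:ℝ)-1+1)*θ = π/2 := by
      rw [hθ]; push_cast; field_simp; ring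
    rw [this, Real.cos_pi_div_two]
  have hc2 : Real.cos (((m:ℝ)-1)*θ) = Real.sin θ := by
    have : ((m:ℝ)-1)*θ = π/2 - θ := by
      rw [hθ]; push_cast; field_simp; ring
    rw [this, Real.cos_pi_div_two_sub]
  rw [hc1, hc2] at htel
  push_cast at htel ⊢
  nlinarith [htel]
end

section
/- For odd n ≥ 3 and odd k, m with 1 ≤ k < m ≤ n-2, the word obtained from the non-underlined edge sequence α(n) = u(3)^R · u(5)^R · ... · u(n-2)^R · u(n-2) · ... · u(5) · u(3) (with u(m) = (1,3,...,m-2)) by erasing all letters other than k and m has the form k^i (m k)^j (k m)^j k^i, where j = f(m), i = f(k) - f(m), and f(x) = (n-x)/2 - 1. -/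
/-- `oddWord m` is the word `1,3,5,…,m-2` (empty for `m < 3`). -/
def oddWord (m : ℕ) : List ℕ := (List.range ((m - 1) / 2)).map (fun i => 2 * i + 1)

/-- The non-underlined edge sequence
`α(n) = u(3)^R · u(5)^R · ⋯ · u(n-2)^R · u(n-2) · ⋯ · u(5) · u(3)`. -/
def alphaWord (n : ℕ) : List ℕ :=
  (((List.range ((n - 3) / 2)).map (fun i => (oddWord (2 * i + 3)).reverse)).flatten) ++
  (((List.range ((n - 3) / 2)).map (fun i => (oddWord (2 * i + 3)).reverse)).flatten).reverse

/-- `rep w n` is the `n`-fold concatenation `w^n`. -/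
def rep (w : List ℕ) (n : ℕ) : List ℕ := (List.replicate n w).flatten

/-- `f x = (n-x)/2 - 1`, the number of occurrences of `x` in each half of `α(n)`. -/
def fcount (n x : ℕ) : ℕ := (n - x) / 2 - 1

lemma filter_range_two (a b : ℕ) (hab : a < b) (c : ℕ) :
    (List.range c).filter (fun j => j = a ∨ j = b) =
      if c ≤ a then [] else if c ≤ b then [a] else [a, b] := by
  induction c with
  | zero => simp
  | succ c ih =>
    rw [List.range_succ, List.filter_append, ih, List.filter_singleton]
    rcases Nat.lt_trichotomy c a with h | h | h
    · rw [if_pos (by omega : c ≤ a), if_pos (by omega)]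
      have : ¬(c = a ∨ c = b) := by omega
      simp [this]
    · subst h
      rw [if_pos le_rfl, if_neg (by omega), if_pos (by omega)]
      simp
    · rcases Nat.lt_trichotomy c b with h2 | h2 | h2
      · rw [if_neg (by omega), if_pos (by omega), if_neg (by omega), if_pos (by omega)]
        have : ¬(c = a ∨ c = b) := by omega
        simp [this]
      · subst h2
        rw [if_neg (by omega), if_pos le_rfl, if_neg (by omega), if_neg (by omega)]
        simp
      · rw [if_neg (by omega), if_neg (by omega), if_neg (by omega), if_neg (by omega)]
        have : ¬(c = a ∨ c = b) := by omega
        simp [this]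

lemma block_filter (a b i : ℕ) (hab : a < b) :
    ((oddWord (2 * i + 3)).reverse).filter (fun x => x = 2*a+1 ∨ x = 2*b+1) =
      if i < a then [] else if i < b then [2*a+1] else [2*b+1, 2*a+1] := by
  rw [List.filter_reverse]
  unfold oddWord
  rw [show (2 * i + 3 - 1) / 2 = i + 1 by omega, List.filter_map]
  have hp : ((fun x => decide (x = 2*a+1 ∨ x = 2*b+1)) ∘ (fun j => 2 * j + 1)) =
      (fun j => decide (j = a ∨ j = b)) := by
    funext j; simp only [Function.comp, decide_eq_decide]; omega
  rw [hp, filter_range_two a b hab]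
  rcases Nat.lt_trichotomy i a with h | h | h
  · rw [if_pos (by omega : i + 1 ≤ a), if_pos h]; rfl
  · subst h
    rw [if_neg (by omega), if_pos (by omega), if_neg (by omega), if_pos hab]; rfl
  · by_cases h2 : i < b
    · rw [if_neg (by omega), if_pos (by omega), if_neg (by omega), if_pos h2]; rfl
    · rw [if_neg (by omega), if_neg (by omega), if_neg (by omega), if_neg h2]; rfl

lemma flatten_replicate_singleton (c x : ℕ) :
    (List.replicate c [x]).flatten = List.replicate c x := by
  induction c with
  | zero => rfl
  | succ c ih => simp [List.replicate_succ, ih]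

lemma rep_reverse (x y : ℕ) (c : ℕ) : (rep [x, y] c).reverse = rep [y, x] c := by
  induction c with
  | zero => rfl
  | succ c ih =>
    rw [rep, List.replicate_succ, List.flatten_cons, List.reverse_append, ← rep, ih,
      show rep [y, x] (c + 1) = rep [y, x] c ++ [y, x] from by
        rw [rep, List.replicate_succ', List.flatten_append, ← rep]; simp]
    simp

lemma half_filter (a d e : ℕ) (hd : 1 ≤ d) :
    (((List.range (a + d + e)).map (fun i => (oddWord (2 * i + 3)).reverse)).flatten).filter
        (fun x => x = 2*a+1 ∨ x = 2*(a+d)+1)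
      = List.replicate d (2*a+1) ++ rep [2*(a+d)+1, 2*a+1] e := by
  rw [List.filter_flatten, List.map_map]
  have h1 : (List.range (a + d + e)).map
        ((List.filter (fun x => decide (x = 2*a+1 ∨ x = 2*(a+d)+1))) ∘
          (fun i => (oddWord (2 * i + 3)).reverse)) =
      (List.range (a + d + e)).map
        (fun i => if i < a then [] else if i < a + d then [2*a+1] else [2*(a+d)+1, 2*a+1]) :=
    List.map_congr_left (fun i _ => block_filter a (a + d) i (by omega))
  rw [h1, List.range_add, List.range_add, List.map_append, List.map_append,
    List.map_map, List.map_map, List.flatten_append, List.flatten_append]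
  have s1 : (((List.range a).map
      (fun i => if i < a then [] else if i < a + d then [2*a+1] else [2*(a+d)+1, 2*a+1]))).flatten
      = [] := by
    rw [List.flatten_eq_nil_iff]
    intro l hl
    simp only [List.mem_map, List.mem_range] at hl
    obtain ⟨i, hi, rfl⟩ := hl
    rw [if_pos hi]
  have s2 : ((List.range d).map
      ((fun i => if i < a then [] else if i < a + d then [2*a+1] else [2*(a+d)+1, 2*a+1])
        ∘ (a + ·))) = List.replicate d [2*a+1] := by
    have : ∀ i ∈ List.range d,
        ((fun i => if i < a then [] else if i < a + d then [2*a+1] else [2*(a+d)+1, 2*a+1])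
          ∘ (a + ·)) i = [2*a+1] := by
      intro i hi
      simp only [List.mem_range] at hi
      simp only [Function.comp]
      rw [if_neg (by omega), if_pos (by omega)]
    rw [List.map_congr_left this, List.map_const', List.length_range]
  have s3 : ((List.range e).map
      ((fun i => if i < a then [] else if i < a + d then [2*a+1] else [2*(a+d)+1, 2*a+1])
        ∘ ((a + d) + ·))) = List.replicate e [2*(a+d)+1, 2*a+1] := by
    have : ∀ i ∈ List.range e,
        ((fun i => if i < a then [] else if i < a + d then [2*a+1] else [2*(a+d)+1, 2*a+1])
          ∘ ((a + d) + ·)) i = [2*(a+d)+1, 2*a+1] := by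
      intro i hi
      simp only [List.mem_range] at hi
      simp only [Function.comp]
      rw [if_neg (by omega), if_neg (by omega)]
    rw [List.map_congr_left this, List.map_const', List.length_range]
  rw [s1, s2, s3, flatten_replicate_singleton]
  rfl

/-- For odd `n ≥ 3` and odd `k, m` with `1 ≤ k < m ≤ n-2`, erasing from `α(n)` all letters
other than `k` and `m` yields `k^i (mk)^j (km)^j k^i` with `j = f(m)`, `i = f(k) - f(m)`. -/
theorem subrosa_projection (n k m : ℕ) (hn : Odd n) (h3 : 3 ≤ n)
    (hk : Odd k) (hm : Odd m) (h1 : 1 ≤ k) (hkm : k < m) (hm2 : m ≤ n - 2) :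
    (alphaWord n).filter (fun x => x = k ∨ x = m) =
      List.replicate (fcount n k - fcount n m) k ++ rep [m, k] (fcount n m)
        ++ rep [k, m] (fcount n m) ++ List.replicate (fcount n k - fcount n m) k := by
  obtain ⟨t, ht⟩ := hn
  obtain ⟨A, hA⟩ := hk
  obtain ⟨B, hB⟩ := hm
  subst ht hA hB
  have hAB : A < B := by omega
  have hBt : B ≤ t - 1 := by omega
  have ht1 : 1 ≤ t := by omega
  set e := t - 1 - B with he
  have hfk : fcount (2*t+1) (2*A+1) - fcount (2*t+1) (2*B+1) = B - A := by
    simp only [fcount]; omega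
  have hfm : fcount (2*t+1) (2*B+1) = e := by
    simp only [fcount]; omega
  rw [hfk, hfm]
  unfold alphaWord
  rw [List.filter_append, List.filter_reverse,
    show (2*t+1 - 3)/2 = A + (B - A) + e by omega,
    show (2*B+1 : ℕ) = 2*(A + (B - A))+1 by omega,
    half_filter A (B - A) e (by omega)]
  rw [List.reverse_append, rep_reverse, List.reverse_replicate]
  simp [List.append_assoc]
end
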